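/- In the proof of the dimer lemma: let {u,w} ∈ Ω and let x be the configuration on the torus (side lengths > 4) equal to p at cell u, q at cell w, and 0 elsewhere. Then the von Neumann neighborhood P(i) of a cell i contains both cells u and w if and only if i = 0 or i = u + w; moreover N_{x,0} = D(u:p, w:q) and N_{x,u+w} = D(-w:p, -u:q), and for every other cell i, the neighborhood configuration N_{x,i} is a monomer. -/
import Mathlib


/-- Directions of the von Neumann neighborhood: `none` is the zero vector,
`some (k, b)` is `e_k` if `b = true` and `-e_k` if `b = false`. -/
abbrev Dir (d : ℕ) := Option (Fin d × Bool)

/-- The opposite direction. -/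
def negDir {d : ℕ} : Dir d → Dir d
  | none => none
  | some (k, b) => some (k, !b)

/-- The integer vector corresponding to a direction. -/
def dirVec {d : ℕ} : Dir d → Fin d → ℤ
  | none => fun _ => 0
  | some (k, b) => fun j => if j = k then (if b then 1 else -1) else 0

/-- The `d`-dimensional torus with side lengths `n k`. -/
abbrev Cell (d : ℕ) (n : Fin d → ℕ) := ∀ k, ZMod (n k)

/-- Translation of a cell by an integer vector (componentwise mod `n k`). -/
def cellAdd {d : ℕ} {n : Fin d → ℕ} (i : Cell d n) (v : Fin d → ℤ) : Cell d n :=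
  fun k => i k + (v k : ZMod (n k))

/-- The von Neumann neighborhood of a cell, as a set of cells. -/
def nbhdSet {d : ℕ} {n : Fin d → ℕ} (i : Cell d n) : Set (Cell d n) :=
  {c | ∃ v : Dir d, c = cellAdd i (dirVec v)}

/-- The neighborhood configuration of cell `i` in configuration `x`. -/
def nbhd {d : ℕ} {n : Fin d → ℕ} {α : Type*} (x : Cell d n → α) (i : Cell d n) :
    Dir d → α :=
  fun v => x (cellAdd i (dirVec v))

/-- The monomer `M_{v:q}`: value `q` in direction `v`, zero elsewhere. -/
def monomer {d : ℕ} (v : Dir d) (q : ℝ) : Dir d → ℝ :=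
  fun u => if u = v then q else 0

/-- The dimer `D(u:p, w:q)`: value `p` in direction `u`, `q` in direction `w`,
zero elsewhere. -/
def dimer {d : ℕ} (u : Dir d) (p : ℝ) (w : Dir d) (q : ℝ) : Dir d → ℝ :=
  fun v => if v = u then p else if v = w then q else 0

/-- `f` is number-conserving: on every torus with all side lengths `> 4` the
induced global map preserves the sum of states, for `Q`-valued configurations. -/
def NumberConserving {d : ℕ} (Q : Set ℝ) (f : (Dir d → ℝ) → ℝ) : Prop :=
  ∀ (n : Fin d → ℕ) (hn : ∀ k, 4 < n k) (x : Cell d n → ℝ), (∀ i, x i ∈ Q) →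
    haveI : ∀ k, NeZero (n k) := fun k => ⟨by have := hn k; omega⟩
    ∑ i, f (nbhd x i) = ∑ i, x i

/-- Split function: (S1), (S2) and (S3). -/
def SplitFunction {d : ℕ} (Q : Set ℝ) (h : (Dir d → ℝ) → ℝ) : Prop :=
  (∀ (v : Dir d) (q : ℝ), q ∈ Q → h (monomer v q) ∈ Q) ∧
  (∀ q : ℝ, q ∈ Q → ∑ v : Dir d, h (monomer v q) = q) ∧
  (∀ N : Dir d → ℝ, (∀ v, N v ∈ Q) → h N = ∑ v : Dir d, h (monomer v (N v)))

/-- Perturbation: vanishes on monomers (P1), and its global map sends every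
configuration to a zero-sum configuration (P2). -/
def Perturbation {d : ℕ} (Q : Set ℝ) (g : (Dir d → ℝ) → ℝ) : Prop :=
  (∀ (v : Dir d) (q : ℝ), q ∈ Q → g (monomer v q) = 0) ∧
  ∀ (n : Fin d → ℕ) (hn : ∀ k, 4 < n k) (x : Cell d n → ℝ), (∀ i, x i ∈ Q) →
    haveI : ∀ k, NeZero (n k) := fun k => ⟨by have := hn k; omega⟩
    ∑ i, g (nbhd x i) = 0

/-- The defining condition of the set `Ω` of admissible pairs of directions. -/
def OmegaPair {d : ℕ} (u w : Dir d) : Prop :=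
  (u = none ∧ w ≠ none) ∨ (u ≠ none ∧ w ≠ none ∧ u ≠ w ∧ u ≠ negDir w)

lemma castInj {m : ℕ} {a b : ℤ} (hm : |a - b| < (m:ℤ)) : ((a : ZMod m) = b) ↔ a = b := by
  constructor
  · intro h
    have h2 := (ZMod.intCast_eq_intCast_iff _ _ _).mp h
    have h3 : (m:ℤ) ∣ b - a := h2.dvd
    have h4 : b - a = 0 := Int.eq_zero_of_abs_lt_dvd h3 (by rw [abs_sub_comm]; exact hm)
    omega
  · rintro rfl; rfl

@[simp] lemma dirVec_none' {d : ℕ} (k : Fin d) : dirVec (none : Dir d) k = 0 := rfl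

lemma dirVec_abs_le {d : ℕ} (v : Dir d) (k : Fin d) : |dirVec v k| ≤ 1 := by
  rcases v with _ | ⟨l, b⟩
  · simp [dirVec]
  · simp only [dirVec]; split_ifs <;> simp

lemma dirVec_negDir {d : ℕ} (v : Dir d) (k : Fin d) : dirVec (negDir v) k = -dirVec v k := by
  rcases v with _ | ⟨l, b⟩
  · simp [dirVec, negDir]
  · by_cases h : k = l <;> cases b <;> simp [dirVec, negDir, h]

lemma dirVec_inj {d : ℕ} {v v' : Dir d} (h : ∀ k, dirVec v k = dirVec v' k) : v = v' := by
  rcases v with _ | ⟨l, b⟩ <;> rcases v' with _ | ⟨l', b'⟩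
  · rfl
  · have := h l'; simp [dirVec] at this; cases b' <;> simp_all
  · have := h l; simp [dirVec] at this; cases b <;> simp_all
  · have h1 := h l
    by_cases hll : l = l'
    · subst hll; simp [dirVec] at h1; cases b <;> cases b' <;> simp_all
    · simp [dirVec, hll, Ne.symm hll] at h1; cases b <;> simp_all

@[simp] lemma dirVec_none {d : ℕ} (k : Fin d) : dirVec (none : Dir d) k = 0 := rfl

lemma dirVec_some_self {d : ℕ} (k : Fin d) (s : Bool) :
    dirVec (some (k, s)) k = if s then 1 else -1 := by simp [dirVec]

lemma dirVec_some_ne {d : ℕ} {k j : Fin d} (s : Bool) (h : j ≠ k) :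
    dirVec (some (k, s)) j = 0 := by simp [dirVec, h]

lemma eq_none_of_dirVec_eq_zero {d : ℕ} {b : Dir d} (h : ∀ k, dirVec b k = 0) : b = none :=
  dirVec_inj (v' := none) (by simpa using h)

lemma key {d : ℕ} {u w a b : Dir d} (hOm : OmegaPair u w)
    (h : ∀ k, dirVec u k + dirVec b k = dirVec w k + dirVec a k) :
    (a = u ∧ b = w) ∨ (a = negDir w ∧ b = negDir u) := by
  classical
  rcases hOm with ⟨rfl, hw⟩ | ⟨hu, hw, huw, hun⟩
  · -- u = none
    obtain ⟨⟨m, τ⟩, rfl⟩ : ∃ p, w = some p := Option.ne_none_iff_exists'.mp hw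
    simp only [dirVec_none, zero_add] at h
    rcases a with _ | ⟨ka, ta⟩
    · left
      refine ⟨rfl, dirVec_inj fun k => ?_⟩
      have := h k; simpa using this
    · by_cases hkm : ka = m
      · subst hkm
        obtain ⟨hb1, hb2⟩ := abs_le.mp (dirVec_abs_le b ka)
        have hm := h ka
        rw [dirVec_some_self, dirVec_some_self] at hm
        have hta : ta = !τ := by
          clear h
          cases τ <;> cases ta <;> simp at hm <;> first | rfl | (exfalso; omega)
        subst hta
        right
        refine ⟨rfl, ?_⟩
        have hb : b = none := eq_none_of_dirVec_eq_zero fun k => by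
          have hk := h k
          have hneg : dirVec (some (ka, !τ)) k = -dirVec (some (ka, τ)) k :=
            dirVec_negDir (some (ka, τ)) k
          omega
        simp [hb, negDir]
      · exfalso
        have h1 := h ka
        have h2 := h m
        rw [dirVec_some_ne τ hkm, dirVec_some_self] at h1
        rw [dirVec_some_self, dirVec_some_ne ta (Ne.symm hkm)] at h2
        clear h
        rcases b with _ | ⟨kb, tb⟩
        · rw [dirVec_none] at h2; cases τ <;> simp at h2
        · by_cases hka : kb = ka
          · subst hka
            rw [dirVec_some_ne tb (Ne.symm hkm)] at h2
            cases τ <;> simp at h2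
          · rw [dirVec_some_ne tb (fun hh => hka hh.symm)] at h1
            cases ta <;> simp at h1
  · -- u, w both some
    obtain ⟨⟨l, σ⟩, rfl⟩ : ∃ p, u = some p := Option.ne_none_iff_exists'.mp hu
    obtain ⟨⟨m, τ⟩, rfl⟩ : ∃ p, w = some p := Option.ne_none_iff_exists'.mp hw
    have hlm : l ≠ m := by
      rintro rfl
      cases σ <;> cases τ <;> simp_all [negDir]
    rcases a with _ | ⟨ka, ta⟩
    · exfalso
      rcases b with _ | ⟨kb, tb⟩
      · have h1 := h l
        rw [dirVec_some_self, dirVec_some_ne τ hlm, dirVec_none] at h1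
        clear h; cases σ <;> simp at h1
      · have h2 := h m
        rw [dirVec_some_ne σ (Ne.symm hlm), dirVec_some_self, dirVec_none] at h2
        by_cases hbm : kb = m
        · subst hbm
          have h1 := h l
          rw [dirVec_some_self, dirVec_some_ne tb hlm, dirVec_some_ne τ hlm,
            dirVec_none] at h1
          clear h; cases σ <;> simp at h1
        · rw [dirVec_some_ne tb (fun hh => hbm hh.symm)] at h2
          clear h; cases τ <;> simp at h2
    · rcases b with _ | ⟨kb, tb⟩
      · exfalso
        by_cases ham : ka = m
        · subst ham
          have h1 := h l
          rw [dirVec_some_self, dirVec_some_ne τ hlm, dirVec_some_ne ta hlm,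
            dirVec_none] at h1
          clear h; cases σ <;> simp at h1
        · have h2 := h m
          rw [dirVec_some_ne σ (Ne.symm hlm), dirVec_some_self, dirVec_none,
            dirVec_some_ne ta (fun hh => ham hh.symm)] at h2
          clear h; cases τ <;> simp at h2
      · by_cases hbl : kb = l
        · subst hbl
          have h1 := h kb
          rw [dirVec_some_self, dirVec_some_self, dirVec_some_ne τ hlm, zero_add] at h1
          by_cases hal : ka = kb
          · subst hal
            rw [dirVec_some_self] at h1
            exfalso; clear h
            cases σ <;> cases tb <;> cases ta <;> simp at h1
          · rw [dirVec_some_ne ta (fun hh => hal hh.symm)] at h1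
            have htb : tb = !σ := by
              clear h
              cases σ <;> cases tb <;> simp at h1 <;> rfl
            subst htb
            have h2 := h m
            rw [dirVec_some_ne σ (Ne.symm hlm), dirVec_some_ne (!σ) (Ne.symm hlm),
              dirVec_some_self] at h2
            by_cases ham : ka = m
            · subst ham
              rw [dirVec_some_self] at h2
              have hta : ta = !τ := by
                clear h
                cases τ <;> cases ta <;> simp at h2 <;> rfl
              subst hta
              right; exact ⟨rfl, rfl⟩
            · exfalso
              rw [dirVec_some_ne ta (fun hh => ham hh.symm)] at h2
              clear h; cases τ <;> simp at h2
        · have h1 := h l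
          rw [dirVec_some_self, dirVec_some_ne tb (fun hh => hbl hh.symm),
            dirVec_some_ne τ hlm] at h1
          by_cases hal : ka = l
          · subst hal
            rw [dirVec_some_self] at h1
            have hta : ta = σ := by
              clear h
              cases σ <;> cases ta <;> simp at h1 <;> rfl
            subst hta
            have h2 := h m
            rw [dirVec_some_ne ta (Ne.symm hlm), dirVec_some_self] at h2
            by_cases hbm : kb = m
            · subst hbm
              rw [dirVec_some_self] at h2
              have htb : tb = τ := by
                clear h
                cases τ <;> cases tb <;> simp at h2 <;> rfl
              subst htb
              left; exact ⟨rfl, rfl⟩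
            · exfalso
              rw [dirVec_some_ne tb (fun hh => hbm hh.symm)] at h2
              clear h; cases τ <;> simp at h2
          · exfalso
            rw [dirVec_some_ne ta (fun hh => hal hh.symm)] at h1
            clear h; cases σ <;> simp at h1

lemma cellAdd_inj_dir {d : ℕ} {n : Fin d → ℕ} (hn : ∀ k, 4 < n k) {i : Cell d n}
    {v v' : Dir d} (h : cellAdd i (dirVec v) = cellAdd i (dirVec v')) : v = v' := by
  refine dirVec_inj fun k => ?_
  have hk := congrFun h k
  simp only [cellAdd] at hk
  have hc : ((dirVec v k : ℤ) : ZMod (n k)) = ((dirVec v' k : ℤ) : ZMod (n k)) :=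
    add_left_cancel hk
  obtain ⟨a1, a2⟩ := abs_le.mp (dirVec_abs_le v k)
  obtain ⟨b1, b2⟩ := abs_le.mp (dirVec_abs_le v' k)
  have h5 := hn k
  exact (castInj (abs_lt.mpr ⟨by omega, by omega⟩)).mp hc

lemma cellAdd_cellAdd {d : ℕ} {n : Fin d → ℕ} (i : Cell d n) (a b : Fin d → ℤ) :
    cellAdd (cellAdd i a) b = cellAdd i (fun k => a k + b k) := by
  funext k
  simp only [cellAdd]
  push_cast
  ring

lemma negDir_negDir {d : ℕ} (v : Dir d) : negDir (negDir v) = v := by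
  rcases v with _ | ⟨k, b⟩ <;> simp [negDir]

/-- Key configuration in the proof of the dimer lemma: for `{u,w} ∈ Ω` and the
configuration `x` equal to `p` at cell `u`, `q` at cell `w` and `0` elsewhere,
the neighborhood `P(i)` contains both cells iff `i = 0` or `i = u + w`; the
neighborhood configurations at `0` and `u + w` are the two matching dimers, and
at every other cell the neighborhood configuration is a monomer. -/
theorem dimer_lemma_configuration
    (d : ℕ) (hd : 1 ≤ d) (Q : Set ℝ) (h0 : (0 : ℝ) ∈ Q)
    (n : Fin d → ℕ) (hn : ∀ k, 4 < n k)
    (u w : Dir d) (huw : OmegaPair u w)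
    (p q : ℝ) (hp : p ∈ Q) (hq : q ∈ Q)
    (x : Cell d n → ℝ)
    (hx : ∀ c : Cell d n, x c =
      if c = cellAdd 0 (dirVec u) then p
      else if c = cellAdd 0 (dirVec w) then q else 0) :
    (∀ i : Cell d n,
      (cellAdd 0 (dirVec u) ∈ nbhdSet i ∧ cellAdd 0 (dirVec w) ∈ nbhdSet i) ↔
        (i = 0 ∨ i = cellAdd 0 (dirVec u + dirVec w))) ∧
    nbhd x 0 = dimer u p w q ∧
    nbhd x (cellAdd 0 (dirVec u + dirVec w)) = dimer (negDir w) p (negDir u) q ∧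
    (∀ i : Cell d n, i ≠ 0 → i ≠ cellAdd 0 (dirVec u + dirVec w) →
      ∃ v₀ : Dir d, ∀ v : Dir d, v ≠ v₀ → nbhd x i v = 0) := by
  classical
  have hune : u ≠ w := by
    rcases huw with ⟨rfl, hw⟩ | ⟨_, _, h, _⟩
    · exact fun hh => hw hh.symm
    · exact h
  have hUW : ∀ i : Cell d n,
      (cellAdd 0 (dirVec u) ∈ nbhdSet i ∧ cellAdd 0 (dirVec w) ∈ nbhdSet i) ↔
        (i = 0 ∨ i = cellAdd 0 (dirVec u + dirVec w)) := by
    intro i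
    constructor
    · rintro ⟨⟨va, hva⟩, ⟨vb, hvb⟩⟩
      have hik : ∀ k, i k = ((dirVec u k - dirVec va k : ℤ) : ZMod (n k)) := by
        intro k
        have hk := congrFun hva k
        simp only [cellAdd, Pi.zero_apply, zero_add] at hk
        push_cast
        rw [hk]; ring
      have hik' : ∀ k, i k = ((dirVec w k - dirVec vb k : ℤ) : ZMod (n k)) := by
        intro k
        have hk := congrFun hvb k
        simp only [cellAdd, Pi.zero_apply, zero_add] at hk
        push_cast
        rw [hk]; ring
      have hint : ∀ k, dirVec u k + dirVec vb k = dirVec w k + dirVec va k := by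
        intro k
        have hcast : ((dirVec u k - dirVec va k : ℤ) : ZMod (n k)) =
            ((dirVec w k - dirVec vb k : ℤ) : ZMod (n k)) := (hik k).symm.trans (hik' k)
        obtain ⟨a1, a2⟩ := abs_le.mp (dirVec_abs_le u k)
        obtain ⟨b1, b2⟩ := abs_le.mp (dirVec_abs_le va k)
        obtain ⟨c1, c2⟩ := abs_le.mp (dirVec_abs_le w k)
        obtain ⟨e1, e2⟩ := abs_le.mp (dirVec_abs_le vb k)
        have h5 := hn k
        have := (castInj (abs_lt.mpr ⟨by omega, by omega⟩)).mp hcast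
        omega
      rcases key huw hint with ⟨h1, h2⟩ | ⟨h1, h2⟩
      · left
        funext k
        rw [hik k, h1]
        simp
      · right
        funext k
        rw [hik k, h1]
        simp only [cellAdd, Pi.zero_apply, zero_add, Pi.add_apply, dirVec_negDir,
          sub_neg_eq_add]
    · rintro (rfl | rfl)
      · exact ⟨⟨u, rfl⟩, ⟨w, rfl⟩⟩
      · refine ⟨⟨negDir w, ?_⟩, ⟨negDir u, ?_⟩⟩
        · rw [cellAdd_cellAdd]
          funext k
          simp only [cellAdd, Pi.zero_apply, zero_add, Pi.add_apply, dirVec_negDir]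
          push_cast
          ring
        · rw [cellAdd_cellAdd]
          funext k
          simp only [cellAdd, Pi.zero_apply, zero_add, Pi.add_apply, dirVec_negDir]
          push_cast
          ring
  have hinj0 : ∀ v v' : Dir d,
      cellAdd (0 : Cell d n) (dirVec v) = cellAdd 0 (dirVec v') ↔ v = v' := by
    intro v v'
    exact ⟨fun hh => cellAdd_inj_dir hn hh, fun hh => by rw [hh]⟩
  have hnbhd0 : nbhd x 0 = dimer u p w q := by
    funext v
    simp only [nbhd]
    rw [hx]
    by_cases hvu : v = u
    · rw [if_pos ((hinj0 v u).mpr hvu)]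
      simp [dimer, hvu]
    · rw [if_neg (fun hh => hvu ((hinj0 v u).mp hh))]
      by_cases hvw : v = w
      · rw [if_pos ((hinj0 v w).mpr hvw)]
        simp [dimer, hvu, hvw, if_neg (Ne.symm hune)]
      · rw [if_neg (fun hh => hvw ((hinj0 v w).mp hh))]
        simp [dimer, hvu, hvw]
  have hnbhd1 : nbhd x (cellAdd 0 (dirVec u + dirVec w)) =
      dimer (negDir w) p (negDir u) q := by
    funext v
    simp only [nbhd]
    rw [cellAdd_cellAdd, hx]
    have hiff : ∀ v' : Dir d,
        cellAdd (0 : Cell d n) (fun k => (dirVec u + dirVec w) k + dirVec v k) =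
          cellAdd 0 (dirVec v') ↔
        (∀ k, dirVec u k + dirVec w k + dirVec v k = dirVec v' k) := by
      intro v'
      constructor
      · intro hh k
        have hk := congrFun hh k
        simp only [cellAdd, Pi.zero_apply, zero_add, Pi.add_apply] at hk
        obtain ⟨a1, a2⟩ := abs_le.mp (dirVec_abs_le u k)
        obtain ⟨b1, b2⟩ := abs_le.mp (dirVec_abs_le w k)
        obtain ⟨c1, c2⟩ := abs_le.mp (dirVec_abs_le v k)
        obtain ⟨e1, e2⟩ := abs_le.mp (dirVec_abs_le v' k)
        have h5 := hn k
        have := (castInj (abs_lt.mpr ⟨by omega, by omega⟩)).mp hk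
        omega
      · intro hh
        funext k
        simp only [cellAdd, Pi.zero_apply, zero_add, Pi.add_apply]
        exact_mod_cast congrArg (fun z : ℤ => ((z : ZMod (n k)))) (hh k)
    have hUiff : cellAdd (0 : Cell d n) (fun k => (dirVec u + dirVec w) k + dirVec v k) =
        cellAdd 0 (dirVec u) ↔ v = negDir w := by
      rw [hiff u]
      constructor
      · intro hh
        refine dirVec_inj fun k => ?_
        have := hh k
        rw [dirVec_negDir]
        omega
      · rintro rfl
        intro k
        rw [dirVec_negDir]
        ring
    have hWiff : cellAdd (0 : Cell d n) (fun k => (dirVec u + dirVec w) k + dirVec v k) =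
        cellAdd 0 (dirVec w) ↔ v = negDir u := by
      rw [hiff w]
      constructor
      · intro hh
        refine dirVec_inj fun k => ?_
        have := hh k
        rw [dirVec_negDir]
        omega
      · rintro rfl
        intro k
        rw [dirVec_negDir]
        ring
    by_cases hvw : v = negDir w
    · rw [if_pos (hUiff.mpr hvw)]
      simp [dimer, hvw]
    · rw [if_neg (fun hh => hvw (hUiff.mp hh))]
      by_cases hvu : v = negDir u
      · rw [if_pos (hWiff.mpr hvu)]
        have hne2 : negDir u ≠ negDir w := fun hh =>
          hune (by rw [← negDir_negDir u, hh, negDir_negDir])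
        simp [dimer, hvu, hvw, if_neg hne2]
      · rw [if_neg (fun hh => hvu (hWiff.mp hh))]
        simp [dimer, hvu, hvw]
  refine ⟨hUW, hnbhd0, hnbhd1, ?_⟩
  intro i hi0 hiuw
  by_cases hex : ∃ v : Dir d,
      cellAdd i (dirVec v) = cellAdd 0 (dirVec u) ∨
      cellAdd i (dirVec v) = cellAdd 0 (dirVec w)
  · obtain ⟨v₀, hv₀⟩ := hex
    refine ⟨v₀, fun v hv => ?_⟩
    simp only [nbhd]
    have hnu : cellAdd i (dirVec v) ≠ cellAdd 0 (dirVec u) := by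
      intro hcu
      rcases hv₀ with hU' | hW'
      · exact hv (cellAdd_inj_dir hn (hcu.trans hU'.symm))
      · rcases (hUW i).mp ⟨⟨v, hcu.symm⟩, ⟨v₀, hW'.symm⟩⟩ with h | h
        · exact hi0 h
        · exact hiuw h
    have hnw : cellAdd i (dirVec v) ≠ cellAdd 0 (dirVec w) := by
      intro hcw
      rcases hv₀ with hU' | hW'
      · rcases (hUW i).mp ⟨⟨v₀, hU'.symm⟩, ⟨v, hcw.symm⟩⟩ with h | h
        · exact hi0 h
        · exact hiuw h
      · exact hv (cellAdd_inj_dir hn (hcw.trans hW'.symm))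
    rw [hx, if_neg hnu, if_neg hnw]
  · push_neg at hex
    refine ⟨none, fun v _ => ?_⟩
    simp only [nbhd]
    rw [hx, if_neg (hex v).1, if_neg (hex v).2]
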